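/- Let q ≥ 3 and let ∇ ∈ ℝ^{p×n} be the discrete gradient operator of the 3-dimensional regular grid graph on V = {0,…,q−1}³, so n = q³ and p = 3q²(q−1). Then for every integer ℓ with 54 < ℓ ≤ p, κ_∇(ℓ) ≤ n − (1/3)(ℓ + (3ℓ²)^{1/3} + 2(ℓ/3)^{1/3}) + 2/3, where the powers are real cube roots. -/

import Mathlib

/-- Base-`q` encoding of a grid point, used to orient the edges of the grid graph. -/
def enc (q d : ℕ) (v : Fin d → Fin q) : ℕ := ∑ i : Fin d, q ^ (i : ℕ) * (v i : ℕ)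

/-- The (oriented) edges of the regular grid graph on `{0,…,q−1}^d`: pairs of vertices at
ℓ1-distance 1, canonically oriented. They index the rows of the discrete gradient. -/
abbrev OEdge (q d : ℕ) : Type :=
  {e : (Fin d → Fin q) × (Fin d → Fin q) //
    (∑ i, |(e.1 i : ℤ) - (e.2 i : ℤ)|) = 1 ∧ enc q d e.1 < enc q d e.2}

/-- The discrete gradient operator of the regular grid graph: one row per edge
`e = (v₁, v₂)`, with entry `−1` in the column of `v₁`, `+1` in the column of `v₂`. -/
def grad (q d : ℕ) : Matrix (OEdge q d) (Fin d → Fin q) ℝ :=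
  Matrix.of fun e v => if v = e.1.2 then 1 else if v = e.1.1 then -1 else 0

/-- `W_Λ`: the nullspace of the rows of the discrete gradient indexed by `Λ`. -/
noncomputable def Wgrad (q d : ℕ) (Λ : Finset (OEdge q d)) :
    Submodule ℝ ((Fin d → Fin q) → ℝ) :=
  ⨅ e ∈ Λ, LinearMap.ker
    ((LinearMap.proj e : (OEdge q d → ℝ) →ₗ[ℝ] ℝ) ∘ₗ (grad q d).mulVecLin)

/-- `κ_∇(ℓ) = max{dim W_Λ : Λ ⊆ E, |Λ| ≥ ℓ}` for the discrete gradient of the grid. -/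
noncomputable def kappaGrad (q d ℓ : ℕ) : ℕ :=
  (Finset.univ.filter (fun Λ : Finset (OEdge q d) => ℓ ≤ Λ.card)).sup
    (fun Λ => Module.finrank ℝ (Wgrad q d Λ))

/-!
A vector of `W_Λ` is constant along the edges in `Λ`, so `W_Λ` is the kernel of the Laplacian of
the graph spanned by `Λ` and `dim W_Λ = c`, the number of its connected components.

A vertex set `S` of the cubic grid spans at most `3|S| - 3|S|^{2/3}` edges: an edge in direction
`i` is determined by its source, and no such edge starts at the top point of a line in direction
`i` meeting `S`, so there are at most `|S| - |π_i S|` of them; the discrete Loomis–Whitney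
inequality `|S|² ≤ |π₀ S| |π₁ S| |π₂ S|` together with AM–GM gives `Σ |π_i S| ≥ 3 |S|^{2/3}`.
Summing over the components and merging them with `(x + y - 1)^{2/3} + 1 ≤ x^{2/3} + y^{2/3}`
gives `ℓ ≤ 3u - 3u^{2/3}` for `u = n - c + 1`; solving this cubic inequality in `u^{1/3}` for `u`
bounds `c` as claimed.
-/

open Finset

namespace GridGradient

lemma rpow_one_third_pow_three {x : ℝ} (hx : 0 ≤ x) : (x ^ ((1 : ℝ) / 3)) ^ 3 = x := by
  simpa using Real.rpow_inv_natCast_pow hx (n := 3) (by norm_num)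

lemma pow_three_rpow_one_third {x : ℝ} (hx : 0 ≤ x) : (x ^ 3) ^ ((1 : ℝ) / 3) = x := by
  simpa using Real.pow_rpow_inv_natCast hx (n := 3) (by norm_num)

lemma rpow_one_third_sq {x : ℝ} (hx : 0 ≤ x) : (x ^ ((1 : ℝ) / 3)) ^ 2 = x ^ ((2 : ℝ) / 3) := by
  rw [← Real.rpow_natCast, ← Real.rpow_mul hx]
  norm_num

lemma rpow_two_thirds_le_iff {x y : ℝ} (hx : 0 ≤ x) (hy : 0 ≤ y) :
    x ^ ((2 : ℝ) / 3) ≤ y ↔ x ^ 2 ≤ y ^ 3 := by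
  rw [show (2 : ℝ) / 3 = 2 * (3 : ℝ)⁻¹ by norm_num, Real.rpow_mul hx,
    Real.rpow_inv_le_iff_of_pos (by positivity) hy (by norm_num)]
  norm_cast

lemma three_mul_rpow_two_thirds_le_add {a b c s : ℝ} (ha : 0 ≤ a) (hb : 0 ≤ b) (hc : 0 ≤ c)
    (hs : 0 ≤ s) (h : s ^ 2 ≤ a * b * c) : 3 * s ^ ((2 : ℝ) / 3) ≤ a + b + c := by
  have amgm : a * b * c ≤ ((a + b + c) / 3) ^ 3 := by
    nlinarith [mul_nonneg ha (sq_nonneg (b - c)), mul_nonneg hb (sq_nonneg (a - c)),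
      mul_nonneg hc (sq_nonneg (a - b)), mul_nonneg (add_nonneg (add_nonneg ha hb) hc)
        (add_nonneg (add_nonneg (sq_nonneg (a - b)) (sq_nonneg (b - c))) (sq_nonneg (a - c)))]
  have := (rpow_two_thirds_le_iff hs (by positivity)).2 (h.trans amgm)
  linarith

lemma add_cube_sub_one_sq_le {a b : ℝ} (ha : 1 ≤ a) (hb : 1 ≤ b) :
    (a ^ 3 + b ^ 3 - 1) ^ 2 ≤ (a ^ 2 + b ^ 2 - 1) ^ 3 := by
  nlinarith [mul_nonneg (sub_nonneg.2 ha) (sub_nonneg.2 hb), sq_nonneg (a - b),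
    mul_nonneg (mul_nonneg (sub_nonneg.2 ha) (sub_nonneg.2 hb)) (sq_nonneg (a - b)),
    mul_nonneg (mul_nonneg (mul_nonneg (sub_nonneg.2 ha) (sub_nonneg.2 hb)) (sub_nonneg.2 ha))
      (sub_nonneg.2 hb),
    sq_nonneg (a * b - 1), mul_nonneg (sub_nonneg.2 ha) (sq_nonneg (b - 1)),
    mul_nonneg (sub_nonneg.2 hb) (sq_nonneg (a - 1))]

lemma add_sub_one_rpow_two_thirds_add_one_le {x y : ℝ} (hx : 1 ≤ x) (hy : 1 ≤ y) :
    (x + y - 1) ^ ((2 : ℝ) / 3) + 1 ≤ x ^ ((2 : ℝ) / 3) + y ^ ((2 : ℝ) / 3) := by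
  set a := x ^ ((1 : ℝ) / 3)
  set b := y ^ ((1 : ℝ) / 3)
  have ha : 1 ≤ a := Real.one_le_rpow hx (by norm_num)
  have hb : 1 ≤ b := Real.one_le_rpow hy (by norm_num)
  have hxy : x + y - 1 = a ^ 3 + b ^ 3 - 1 := by
    rw [rpow_one_third_pow_three (by linarith), rpow_one_third_pow_three (by linarith)]
  rw [← rpow_one_third_sq (by linarith : 0 ≤ x), ← rpow_one_third_sq (by linarith : 0 ≤ y),
    ← le_sub_iff_add_le, rpow_two_thirds_le_iff (by linarith) (by nlinarith), hxy]
  exact add_cube_sub_one_sq_le ha hb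

lemma sum_sub_card_add_one_rpow_two_thirds_add_le {ι : Type*} (s : Finset ι) {f : ι → ℝ}
    (hf : ∀ i ∈ s, 1 ≤ f i) :
    (∑ i ∈ s, f i - #s + 1) ^ ((2 : ℝ) / 3) + (#s - 1) ≤ ∑ i ∈ s, f i ^ ((2 : ℝ) / 3) := by
  classical
  induction s using Finset.induction_on with
  | empty => simp
  | insert a s ha ih =>
    have hfs : ∀ i ∈ s, 1 ≤ f i := fun i hi => hf i (mem_insert_of_mem hi)
    have hsum : (#s : ℝ) ≤ ∑ i ∈ s, f i := by
      simpa using Finset.sum_le_sum hfs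
    have hpair := add_sub_one_rpow_two_thirds_add_one_le (hf a (mem_insert_self a s))
      (by linarith : 1 ≤ ∑ i ∈ s, f i - #s + 1)
    rw [sum_insert ha, sum_insert ha, card_insert_of_notMem ha]
    push_cast
    rw [show f a + ∑ i ∈ s, f i - (#s + 1) + 1 = f a + (∑ i ∈ s, f i - #s + 1) - 1 by ring]
    linarith [ih hfs]

lemma cube_add_sq_add_le_of_cube_le {L t : ℝ} (hL : 0 ≤ L) (ht : 1 ≤ t)
    (h : L ^ 3 ≤ t ^ 3 - t ^ 2) : L ^ 3 + L ^ 2 + 2 / 3 * L + 1 / 3 ≤ t ^ 3 := by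
  -- `s ↦ s ^ 3 - s ^ 2` is increasing on `[1, ∞)`; compare `t` with `s = √(L² + 2L/3 + 1/3)`.
  set s := Real.sqrt (L ^ 2 + 2 / 3 * L + 1 / 3)
  have hs0 : 0 ≤ s := Real.sqrt_nonneg _
  have hs2 : s ^ 2 = L ^ 2 + 2 / 3 * L + 1 / 3 := Real.sq_sqrt (by positivity)
  have hs3 : s ^ 3 ≤ L ^ 3 + s ^ 2 := by
    refine (pow_le_pow_iff_left₀ (by positivity) (by positivity) two_ne_zero).1 ?_
    rw [show (s ^ 3) ^ 2 = (s ^ 2) ^ 3 by ring, hs2]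
    nlinarith [pow_nonneg hL 3, sq_nonneg L]
  have hst : s ≤ t := by
    by_contra! hts
    nlinarith [mul_pos (sub_pos.2 hts) (by nlinarith : 0 < s ^ 2 + s * t + t ^ 2 - s - t)]
  nlinarith [pow_le_pow_left₀ hs0 hst 2]

lemma one_third_mul_add_rpow_eq {ℓ : ℝ} (hℓ : 0 ≤ ℓ) :
    1 / 3 * (ℓ + (3 * ℓ ^ 2) ^ ((1 : ℝ) / 3) + 2 * (ℓ / 3) ^ ((1 : ℝ) / 3)) =
      ((ℓ / 3) ^ ((1 : ℝ) / 3)) ^ 3 + ((ℓ / 3) ^ ((1 : ℝ) / 3)) ^ 2 +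
        2 / 3 * (ℓ / 3) ^ ((1 : ℝ) / 3) := by
  set L := (ℓ / 3) ^ ((1 : ℝ) / 3)
  have hL : 0 ≤ L := by positivity
  have hℓL : ℓ = 3 * L ^ 3 := by rw [rpow_one_third_pow_three (by positivity)]; ring
  rw [show 3 * ℓ ^ 2 = (3 * L ^ 2) ^ 3 by rw [hℓL]; ring, pow_three_rpow_one_third (by positivity),
    hℓL]
  ring

lemma cube_add_sq_add_le_of_cube_le_sq_mul {L Q : ℝ} (hL : 0 ≤ L) (hQ : 0 ≤ Q)
    (h : L ^ 3 ≤ Q ^ 2 * (Q - 1)) : L ^ 3 + L ^ 2 + 2 / 3 * L ≤ Q ^ 3 + 2 / 3 := by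
  rcases le_or_gt Q 1 with hQ1 | hQ1
  · have : L ^ 3 ≤ 0 := h.trans (mul_nonpos_of_nonneg_of_nonpos (by positivity) (by linarith))
    obtain rfl : L = 0 := pow_eq_zero_iff three_ne_zero |>.1 (le_antisymm this (by positivity))
    norm_num
    positivity
  · have hLQ : L ≤ Q - 1 / 3 :=
      (pow_le_pow_iff_left₀ hL (by linarith) three_ne_zero).1 (by nlinarith)
    nlinarith [mul_le_mul hLQ hLQ hL (by linarith)]

lemma one_third_mul_add_rpow_add_le {u ℓ : ℝ} (hu : 1 ≤ u) (hℓ : 0 ≤ ℓ)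
    (h : ℓ ≤ 3 * u - 3 * u ^ ((2 : ℝ) / 3)) :
    1 / 3 * (ℓ + (3 * ℓ ^ 2) ^ ((1 : ℝ) / 3) + 2 * (ℓ / 3) ^ ((1 : ℝ) / 3)) + 1 / 3 ≤ u := by
  have hu3 := rpow_one_third_pow_three (by linarith : 0 ≤ u)
  rw [one_third_mul_add_rpow_eq hℓ, ← hu3]
  refine cube_add_sq_add_le_of_cube_le (by positivity) (Real.one_le_rpow hu (by norm_num)) ?_
  rw [rpow_one_third_pow_three (by positivity), hu3, rpow_one_third_sq (by linarith)]
  linarith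

variable {q d : ℕ}

lemma enc_sub_enc_of_eq_of_ne {a b : Fin d → Fin q} {i : Fin d} (h : ∀ j ≠ i, a j = b j) :
    (enc q d b : ℤ) - enc q d a = q ^ (i : ℕ) * ((b i : ℤ) - a i) := by
  simp only [enc, Nat.cast_sum, Nat.cast_mul, Nat.cast_pow, ← sum_sub_distrib]
  rw [sum_eq_single i (fun j _ hj => by rw [h j hj]; ring) (by simp)]
  ring

namespace OEdge

lemma exists_dir (e : OEdge q d) :
    ∃ i, (∀ j ≠ i, e.1.1 j = e.1.2 j) ∧ (e.1.2 i : ℕ) = e.1.1 i + 1 := by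
  obtain ⟨⟨a, b⟩, hsum, henc⟩ := e
  dsimp only at hsum henc ⊢
  obtain ⟨i, hi⟩ : ∃ i, a i ≠ b i := by
    by_contra! h
    simp [h] at hsum
  have hi1 : 1 ≤ |(a i : ℤ) - b i| :=
    Int.one_le_abs (sub_ne_zero.2 fun h => hi (Fin.ext (by exact_mod_cast h)))
  rw [← add_sum_erase _ _ (mem_univ i)] at hsum
  have hrest_nonneg := sum_nonneg fun j (_ : j ∈ univ.erase i) => abs_nonneg ((a j : ℤ) - b j)
  have habs : |(a i : ℤ) - b i| = 1 := by linarith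
  have hrest := (sum_eq_zero_iff_of_nonneg fun j _ => abs_nonneg ((a j : ℤ) - b j)).1
    (by linarith)
  have hoff : ∀ j ≠ i, a j = b j := fun j hj => Fin.ext <| by
    have := hrest j (mem_erase.2 ⟨hj, mem_univ j⟩)
    rwa [abs_eq_zero, sub_eq_zero, Nat.cast_inj] at this
  refine ⟨i, hoff, ?_⟩
  have hpos : 0 < (q : ℤ) ^ (i : ℕ) * ((b i : ℤ) - a i) := by
    rw [← enc_sub_enc_of_eq_of_ne hoff]
    omega
  have := pos_of_mul_pos_right hpos (by positivity)
  rcases abs_cases ((a i : ℤ) - b i) with ⟨h, _⟩ | ⟨h, _⟩ <;> omega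

noncomputable def dir (e : OEdge q d) : Fin d := (exists_dir e).choose

lemma fst_apply_of_ne_dir (e : OEdge q d) {j : Fin d} (hj : j ≠ dir e) : e.1.1 j = e.1.2 j :=
  (exists_dir e).choose_spec.1 j hj

lemma snd_apply_dir (e : OEdge q d) : (e.1.2 (dir e) : ℕ) = e.1.1 (dir e) + 1 :=
  (exists_dir e).choose_spec.2

lemma fst_ne_snd (e : OEdge q d) : e.1.1 ≠ e.1.2 := fun h => by
  have := snd_apply_dir e
  rw [h] at this
  omega

lemma ext_of_fst_eq_of_dir_eq {e e' : OEdge q d} (h₁ : e.1.1 = e'.1.1) (h₂ : dir e = dir e') :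
    e = e' := by
  refine Subtype.ext (Prod.ext h₁ (funext fun j => ?_))
  by_cases hj : j = dir e
  · subst hj
    have := snd_apply_dir e
    have := snd_apply_dir e'
    rw [← h₂, ← h₁] at this
    exact Fin.ext (by omega)
  · rw [← fst_apply_of_ne_dir e hj, h₁, fst_apply_of_ne_dir e' (h₂ ▸ hj)]

end OEdge

def forgetCoord {α : Type*} (i : Fin d) (v : Fin d → α) : {j // j ≠ i} → α := fun j => v j

lemma eq_of_forgetCoord_eq {α : Type*} {i : Fin d} {v w : Fin d → α}
    (h : forgetCoord i v = forgetCoord i w) (hi : v i = w i) : v = w := funext fun j => by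
  by_cases hj : j = i
  · rwa [hj]
  · exact congrFun h ⟨j, hj⟩

lemma eq_of_forgetCoord_eq_of_ne {α : Type*} {i j : Fin d} (hij : i ≠ j) {v w : Fin d → α}
    (hi : forgetCoord i v = forgetCoord i w) (hj : forgetCoord j v = forgetCoord j w) : v = w :=
  eq_of_forgetCoord_eq hi (congrFun hj ⟨i, hij⟩)

lemma card_filter_dir_add_card_image_forgetCoord_le (S : Finset (Fin d → Fin q))
    {F : Finset (OEdge q d)} (hF : ∀ e ∈ F, e.1.1 ∈ S ∧ e.1.2 ∈ S) (i : Fin d) :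
    #{e ∈ F | OEdge.dir e = i} + #(S.image (forgetCoord i)) ≤ #S := by
  classical
  set T := {e ∈ F | OEdge.dir e = i}.image fun e => e.1.1
  have hT : #T = #{e ∈ F | OEdge.dir e = i} := card_image_of_injOn fun e he e' he' h =>
    OEdge.ext_of_fst_eq_of_dir_eq h ((mem_filter.1 he).2.trans (mem_filter.1 he').2.symm)
  have hTS : T ⊆ S := fun v hv => by
    obtain ⟨e, he, rfl⟩ := mem_image.1 hv
    exact (hF e (mem_filter.1 he).1).1
  -- The top point of each fibre of `forgetCoord i` is not the source of an edge in direction `i`.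
  have himage : #(S.image (forgetCoord i)) ≤ #(S \ T) := by
    refine card_le_card_of_surjOn (forgetCoord i) fun w hw => ?_
    obtain ⟨v, hv, rfl⟩ := mem_image.1 (mem_coe.1 hw)
    obtain ⟨v₀, hv₀, hmax⟩ := exists_max_image {v' ∈ S | forgetCoord i v' = forgetCoord i v}
      (fun v' => (v' i : ℕ)) ⟨v, mem_filter.2 ⟨hv, rfl⟩⟩
    obtain ⟨hv₀S, hv₀v⟩ := mem_filter.1 hv₀
    refine ⟨v₀, mem_sdiff.2 ⟨hv₀S, fun hv₀T => ?_⟩, hv₀v⟩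
    obtain ⟨e, he, rfl⟩ := mem_image.1 hv₀T
    obtain ⟨heF, rfl⟩ := mem_filter.1 he
    have hsnd : forgetCoord (OEdge.dir e) e.1.2 = forgetCoord (OEdge.dir e) e.1.1 :=
      funext fun j => (OEdge.fst_apply_of_ne_dir e j.2).symm
    have := hmax e.1.2 (mem_filter.2 ⟨(hF e heF).2, hsnd.trans hv₀v⟩)
    have := OEdge.snd_apply_dir e
    omega
  rw [card_sdiff_of_subset hTS] at himage
  have := card_le_card hTS
  omega

lemma sq_card_le_prod_card_image_forgetCoord {α : Type*} [Fintype α] [DecidableEq α]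
    (S : Finset (Fin 3 → α)) :
    #S ^ 2 ≤ #(S.image (forgetCoord 0)) * #(S.image (forgetCoord 1)) *
      #(S.image (forgetCoord 2)) := by
  set slice : α → Finset (Fin 3 → α) := fun z => {v ∈ S | v 2 = z}
  have hS : #S = ∑ z, #(slice z) := card_eq_sum_card_fiberwise fun v _ => mem_univ (v 2)
  have hslice_le (z : α) : #(slice z) ≤ #(S.image (forgetCoord 2)) :=
    card_le_card_of_injOn (forgetCoord 2) (fun v hv => mem_image_of_mem _ (mem_filter.1 hv).1)
      fun v hv w hw h =>
        eq_of_forgetCoord_eq h ((mem_filter.1 hv).2.trans (mem_filter.1 hw).2.symm)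
  have hslice_prod (z : α) :
      #(slice z) ≤ #((slice z).image (forgetCoord 0)) * #((slice z).image (forgetCoord 1)) := by
    rw [← card_product]
    exact card_le_card_of_injOn (fun v => (forgetCoord 0 v, forgetCoord 1 v))
      (fun v hv => mem_product.2 ⟨mem_image_of_mem _ hv, mem_image_of_mem _ hv⟩)
      fun v _ w _ h => eq_of_forgetCoord_eq_of_ne (by decide) (Prod.ext_iff.1 h).1
        (Prod.ext_iff.1 h).2
  have hsum_image (i : Fin 3) (hi : i ≠ 2) :
      ∑ z, #((slice z).image (forgetCoord i)) = #(S.image (forgetCoord i)) := by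
    rw [card_eq_sum_card_fiberwise (s := S.image (forgetCoord i))
      (f := fun w => w ⟨2, hi.symm⟩) fun _ _ => mem_univ _]
    refine sum_congr rfl fun z _ => ?_
    rw [filter_image]
    rfl
  have hCS := sum_sq_le_sum_mul_sum_of_sq_le_mul univ
    (r := fun z => #(slice z)) (f := fun z => #((slice z).image (forgetCoord 0)))
    (g := fun z => #(S.image (forgetCoord 2)) * #((slice z).image (forgetCoord 1)))
    (fun _ _ => Nat.zero_le _) (fun _ _ => Nat.zero_le _) fun z _ => by
      calc #(slice z) ^ 2 = #(slice z) * #(slice z) := sq _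
        _ ≤ #(S.image (forgetCoord 2)) *
            (#((slice z).image (forgetCoord 0)) * #((slice z).image (forgetCoord 1))) :=
          Nat.mul_le_mul (hslice_le z) (hslice_prod z)
        _ = _ := by ring
  rw [hS]
  refine hCS.trans (le_of_eq ?_)
  rw [← mul_sum, hsum_image 0 (by decide), hsum_image 1 (by decide)]
  ring

lemma card_le_three_mul_sub_rpow_two_thirds (S : Finset (Fin 3 → Fin q))
    {F : Finset (OEdge q 3)} (hF : ∀ e ∈ F, e.1.1 ∈ S ∧ e.1.2 ∈ S) :
    (#F : ℝ) ≤ 3 * #S - 3 * (#S : ℝ) ^ ((2 : ℝ) / 3) := by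
  have hdir (i : Fin 3) : (#{e ∈ F | OEdge.dir e = i} : ℝ) + #(S.image (forgetCoord i)) ≤ #S := by
    exact_mod_cast card_filter_dir_add_card_image_forgetCoord_le S hF i
  have hLW : (#S : ℝ) ^ 2 ≤ #(S.image (forgetCoord 0)) * #(S.image (forgetCoord 1)) *
      #(S.image (forgetCoord 2)) := by
    exact_mod_cast sq_card_le_prod_card_image_forgetCoord S
  have hAMGM := three_mul_rpow_two_thirds_le_add (by positivity) (by positivity) (by positivity)
    (by positivity) hLW
  rw [card_eq_sum_card_fiberwise fun e _ => mem_univ (OEdge.dir e)]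
  push_cast
  rw [Fin.sum_univ_three]
  linarith [hdir 0, hdir 1, hdir 2]

lemma grad_mulVec_apply (x : (Fin d → Fin q) → ℝ) (e : OEdge q d) :
    (grad q d).mulVec x e = x e.1.2 - x e.1.1 := by
  have hne := OEdge.fst_ne_snd e
  simp [Matrix.mulVec, dotProduct, grad, ite_mul, sum_ite, filter_eq', hne, sub_eq_add_neg]

lemma mem_Wgrad_iff {Λ : Finset (OEdge q d)} {x : (Fin d → Fin q) → ℝ} :
    x ∈ Wgrad q d Λ ↔ ∀ e ∈ Λ, x e.1.1 = x e.1.2 := by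
  simp only [Wgrad, Submodule.mem_iInf, LinearMap.mem_ker, LinearMap.coe_comp,
    Function.comp_apply, LinearMap.proj_apply, Matrix.mulVecLin_apply, grad_mulVec_apply]
  exact forall₂_congr fun e _ => by constructor <;> intro h <;> linarith

def edgeGraph (Λ : Finset (OEdge q d)) : SimpleGraph (Fin d → Fin q) :=
  SimpleGraph.fromRel fun u v => ∃ e ∈ Λ, e.1 = (u, v)

lemma finrank_Wgrad (Λ : Finset (OEdge q d)) :
    Module.finrank ℝ (Wgrad q d Λ) = Nat.card (edgeGraph Λ).ConnectedComponent := by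
  classical
  have hW : Wgrad q d Λ = LinearMap.ker (Matrix.toLin' ((edgeGraph Λ).lapMatrix ℝ)) := by
    ext x
    rw [mem_Wgrad_iff, LinearMap.mem_ker, Matrix.toLin'_apply,
      SimpleGraph.lapMatrix_mulVec_eq_zero_iff_forall_adj]
    simp only [edgeGraph, SimpleGraph.fromRel_adj]
    refine ⟨fun h u v ⟨_, huv⟩ => ?_, fun h e he => h _ _ ⟨OEdge.fst_ne_snd e, .inl ⟨e, he, rfl⟩⟩⟩
    rcases huv with ⟨e, he, hev⟩ | ⟨e, he, hev⟩ <;> obtain ⟨rfl, rfl⟩ := Prod.ext_iff.1 hev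
    exacts [h e he, (h e he).symm]
  rw [hW, Nat.card_eq_fintype_card,
    SimpleGraph.card_connectedComponent_eq_finrank_ker_toLin'_lapMatrix]

lemma card_connectedComponent_edgeGraph_le (Λ : Finset (OEdge q d)) :
    Nat.card (edgeGraph Λ).ConnectedComponent ≤ q ^ d := by
  simpa using Nat.card_le_card_of_surjective _ fun K : (edgeGraph Λ).ConnectedComponent =>
    K.exists_rep

lemma card_le_three_mul_sub_rpow_two_thirds_of_connectedComponent (Λ : Finset (OEdge q 3)) :
    (#Λ : ℝ) ≤ 3 * ((q : ℝ) ^ 3 - Nat.card (edgeGraph Λ).ConnectedComponent + 1) -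
      3 * ((q : ℝ) ^ 3 - Nat.card (edgeGraph Λ).ConnectedComponent + 1) ^ ((2 : ℝ) / 3) := by
  classical
  set G := edgeGraph Λ
  let S (K : G.ConnectedComponent) : Finset (Fin 3 → Fin q) := {v | G.connectedComponentMk v = K}
  let F (K : G.ConnectedComponent) : Finset (OEdge q 3) :=
    {e ∈ Λ | G.connectedComponentMk e.1.1 = K}
  have hF (K : G.ConnectedComponent) : ∀ e ∈ F K, e.1.1 ∈ S K ∧ e.1.2 ∈ S K := fun e he => by
    obtain ⟨heΛ, hK⟩ := mem_filter.1 he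
    have hadj : G.Adj e.1.1 e.1.2 :=
      (SimpleGraph.fromRel_adj _ _ _).2 ⟨OEdge.fst_ne_snd e, .inl ⟨e, heΛ, rfl⟩⟩
    exact ⟨mem_filter.2 ⟨mem_univ _, hK⟩, mem_filter.2 ⟨mem_univ _,
      (SimpleGraph.ConnectedComponent.connectedComponentMk_eq_of_adj hadj).symm.trans hK⟩⟩
  have hS (K : G.ConnectedComponent) : (1 : ℝ) ≤ #(S K) := by
    obtain ⟨v, hv⟩ := K.exists_rep
    exact_mod_cast card_pos.2 ⟨v, (mem_filter.2 ⟨mem_univ _, hv⟩ : v ∈ S K)⟩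
  have hV : ∑ K, (#(S K) : ℝ) = (q : ℝ) ^ 3 := by
    rw [← Nat.cast_sum,
      ← card_eq_sum_card_fiberwise fun v _ => mem_univ (G.connectedComponentMk v)]
    simp
  have hmerge := sum_sub_card_add_one_rpow_two_thirds_add_le univ fun K _ => hS K
  rw [hV, card_univ, ← Nat.card_eq_fintype_card] at hmerge
  calc (#Λ : ℝ) = ∑ K, (#(F K) : ℝ) := by
        rw [← Nat.cast_sum,
          card_eq_sum_card_fiberwise fun e _ => mem_univ (G.connectedComponentMk e.1.1)]
    _ ≤ ∑ K, (3 * #(S K) - 3 * (#(S K) : ℝ) ^ ((2 : ℝ) / 3)) :=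
        sum_le_sum fun K _ => card_le_three_mul_sub_rpow_two_thirds (S K) (hF K)
    _ = 3 * (q : ℝ) ^ 3 - 3 * ∑ K, (#(S K) : ℝ) ^ ((2 : ℝ) / 3) := by
        rw [sum_sub_distrib, ← mul_sum, ← mul_sum, hV]
    _ ≤ _ := by linarith

lemma one_third_mul_add_rpow_le_pow_three_add {q ℓ : ℕ} (hlp : ℓ ≤ 3 * q ^ 2 * (q - 1)) :
    1 / 3 * ((ℓ : ℝ) + (3 * (ℓ : ℝ) ^ 2) ^ ((1 : ℝ) / 3) + 2 * ((ℓ : ℝ) / 3) ^ ((1 : ℝ) / 3)) ≤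
      (q : ℝ) ^ 3 + 2 / 3 := by
  have hℓ : (ℓ : ℝ) ≤ 3 * (q : ℝ) ^ 2 * ((q : ℝ) - 1) := by
    rcases Nat.eq_zero_or_pos q with rfl | hq
    · simp_all
    · simpa [Nat.cast_sub hq] using (Nat.cast_le (α := ℝ)).2 hlp
  rw [one_third_mul_add_rpow_eq (Nat.cast_nonneg ℓ)]
  refine cube_add_sq_add_le_of_cube_le_sq_mul (by positivity) (Nat.cast_nonneg q) ?_
  rw [rpow_one_third_pow_three (by positivity)]
  linarith

end GridGradient

open GridGradient in
theorem stmt_10_general (q : ℕ) (ℓ : ℕ) (hlp : ℓ ≤ 3 * q ^ 2 * (q - 1)) :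
    (kappaGrad q 3 ℓ : ℝ) ≤
      (q : ℝ) ^ 3 - (1 / 3) * ((ℓ : ℝ) + (3 * (ℓ : ℝ) ^ 2) ^ ((1 : ℝ) / 3) +
        2 * ((ℓ : ℝ) / 3) ^ ((1 : ℝ) / 3)) + 2 / 3 := by
  have hrhs := one_third_mul_add_rpow_le_pow_three_add hlp
  -- Bounding every term by `⌊rhs⌋₊` also covers the empty supremum, since `rhs ≥ 0` by `hrhs`.
  refine (Nat.cast_le.2 (Finset.sup_le fun Λ hΛ => Nat.le_floor ?_)).trans
    (Nat.floor_le (by linarith))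
  have hℓ : (ℓ : ℝ) ≤ #Λ := by exact_mod_cast (mem_filter.1 hΛ).2
  have hc : (Nat.card (edgeGraph Λ).ConnectedComponent : ℝ) ≤ (q : ℝ) ^ 3 := by
    exact_mod_cast card_connectedComponent_edgeGraph_le Λ
  have := one_third_mul_add_rpow_add_le (by linarith) (Nat.cast_nonneg ℓ)
    (hℓ.trans (card_le_three_mul_sub_rpow_two_thirds_of_connectedComponent Λ))
  rw [finrank_Wgrad]
  linarith

/-- 3D bound: for `54 < ℓ ≤ p = 3q²(q−1)`,
`κ_∇(ℓ) ≤ n − (1/3)(ℓ + (3ℓ²)^{1/3} + 2(ℓ/3)^{1/3}) + 2/3` with `n = q³`. -/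
theorem stmt_10 (q : ℕ) (hq : 3 ≤ q) (ℓ : ℕ) (hl : 54 < ℓ) (hlp : ℓ ≤ 3 * q ^ 2 * (q - 1)) :
    (kappaGrad q 3 ℓ : ℝ) ≤
      (q : ℝ) ^ 3 - (1 / 3) * ((ℓ : ℝ) + (3 * (ℓ : ℝ) ^ 2) ^ ((1 : ℝ) / 3) +
        2 * ((ℓ : ℝ) / 3) ^ ((1 : ℝ) / 3)) + 2 / 3 :=
  stmt_10_general q ℓ hlp
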